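/- arXiv:1809.02750 — 3 statements merged into one kernel-verified Lean document; each statement's English description precedes it below -/
import Mathlib

section
/- Practically stable initial set for switched discrete systems (Corollary 2): Set λ := max_{p∈P} λ_p ∈ (0,1) and α̂(s) := max_{p∈P} α_p(s), and fix δ ∈ (λ, 1). Then the set S := ⋂_{p∈P} { x ∈ ℝ^n : V_p(x) ≤ ω } is nonempty and compact, and for every switching signal σ with average dwell time N_a ≥ ln(μ)/ln(δ/λ) and chatter bound N_0 ≥ 1, every bounded discrete disturbance d, and every initial state x_0 ∈ S, the solution (x_k) of x_{k+1} = f_{σ(k)}(x_k, d_k) satisfies: for every k ≥ 0 there exists p ∈ P with V_p(x_k) ≤ μ^{N_0}·ω + (μ^{N_0}/(1−δ))·α̂(‖d‖∞). -/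
/-! Along a trajectory put `w k = V (σ k) (x k)`. At every step either the switch happens where the
old Lyapunov value is below `κ`, which resets the new one below `ω`, or
`w (k+1) ≤ μ^[σ k ≠ σ (k+1)] (λ w k + α̂)`. The average-dwell-time condition says that the excess
`e k = max_{j ≤ k} (N(j,k) - (k - j) / N_a)` stays in `[0, N_0]`, so the gain `g k = μ ^ e k` is
bounded by `μ ^ N_0` and pays for each switch at the price of a factor `μ ^ (1 / N_a)` per step,
while `μ ^ (1 / N_a) λ ≤ δ`. Induction then gives `w k ≤ g k (ω + μ ^ (1 / N_a) α̂ / (1 - δ))`,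
and one more decrease step in the old mode `σ k` yields the bound at `x (k+1)`. -/

/-- A class `K∞` function: continuous, strictly increasing on `[0,∞)`, vanishing at `0`,
and tending to `∞`. -/
def IsClassKInf (a : ℝ → ℝ) : Prop :=
  ContinuousOn a (Set.Ici 0) ∧ StrictMonoOn a (Set.Ici 0) ∧ a 0 = 0 ∧
    Filter.Tendsto a Filter.atTop Filter.atTop

/-- A class `KL` function. -/
def IsClassKL (b : ℝ → ℝ → ℝ) : Prop :=
  (∀ t, 0 ≤ t → IsClassKInf fun s => b s t) ∧
  (∀ s, 0 ≤ s → StrictAntiOn (b s) (Set.Ici 0)) ∧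
  (∀ s, 0 ≤ s → Filter.Tendsto (b s) Filter.atTop (nhds 0))

/-- Number of switches of the switching signal `sg` on the discrete interval `[kl, k)`. -/
noncomputable def switchCountD {P : Type} (sg : ℕ → P) (kl k : ℕ) : ℕ :=
  {j : ℕ | kl ≤ j ∧ j < k ∧ sg j ≠ sg (j + 1)}.ncard

/-- `sg` has average dwell time `Na` with chatter bound `N0`. -/
def HasADTD {P : Type} (sg : ℕ → P) (N0 Na : ℝ) : Prop :=
  ∀ kl k : ℕ, kl ≤ k → (switchCountD sg kl k : ℝ) ≤ N0 + ((k : ℝ) - (kl : ℝ)) / Na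

open Finset Filter

section Switching

variable {P : Type} (sg : ℕ → P)

theorem switchCountD_eq_card [DecidableEq P] (j k : ℕ) :
    switchCountD sg j k = ((Ico j k).filter fun i => sg i ≠ sg (i + 1)).card := by
  rw [switchCountD, ← Set.ncard_coe_finset]
  congr 1
  ext i
  simp [and_assoc]

theorem switchCountD_self (k : ℕ) : switchCountD sg k k = 0 := by
  classical
  simp [switchCountD_eq_card]

theorem switchCountD_succ [DecidableEq P] {j k : ℕ} (h : j ≤ k) :
    switchCountD sg j (k + 1) = switchCountD sg j k + if sg k = sg (k + 1) then 0 else 1 := by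
  rw [switchCountD_eq_card, switchCountD_eq_card, Nat.Ico_succ_right_eq_insert_Ico h,
    filter_insert]
  by_cases hsw : sg k = sg (k + 1)
  · simp [hsw]
  · simp [hsw, card_insert_of_notMem]

noncomputable def switchExcess (Na : ℝ) (k : ℕ) : ℝ :=
  (range (k + 1)).sup' nonempty_range_add_one
    fun j => (switchCountD sg j k : ℝ) - ((k : ℝ) - j) / Na

variable {sg}

theorem switchExcess_nonneg (Na : ℝ) (k : ℕ) : 0 ≤ switchExcess sg Na k :=
  le_sup'_of_le _ (self_mem_range_succ k) (by simp [switchCountD_self])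

theorem switchExcess_le {N0 Na : ℝ} (h : HasADTD sg N0 Na) (k : ℕ) : switchExcess sg Na k ≤ N0 :=
  sup'_le _ _ fun j hj => by
    have := h j k (Nat.lt_succ_iff.1 (mem_range.1 hj))
    linarith

theorem switchExcess_add_le [DecidableEq P] (Na : ℝ) (k : ℕ) :
    switchExcess sg Na k + (if sg k = sg (k + 1) then 0 else 1 : ℕ) ≤
      switchExcess sg Na (k + 1) + 1 / Na := by
  rw [← le_sub_iff_add_le, switchExcess]
  refine sup'_le _ _ fun j hj => ?_
  have hjk : j ≤ k := Nat.lt_succ_iff.1 (mem_range.1 hj)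
  have hN : (switchCountD sg j (k + 1) : ℝ) =
      switchCountD sg j k + ((if sg k = sg (k + 1) then 0 else 1 : ℕ) : ℝ) := by
    rw [switchCountD_succ sg hjk, Nat.cast_add]
  have hle : (switchCountD sg j (k + 1) : ℝ) - ((k + 1 : ℕ) - j : ℝ) / Na ≤
      switchExcess sg Na (k + 1) :=
    le_sup' (fun i => (switchCountD sg i (k + 1) : ℝ) - ((k + 1 : ℕ) - i : ℝ) / Na)
      (mem_range.2 (Nat.lt_succ_of_le (hjk.trans k.le_succ)))
  have hk : ((k + 1 : ℕ) : ℝ) - j = ((k : ℝ) - j) + 1 := by push_cast; ring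
  rw [hN, hk, add_div] at hle
  linarith

theorem exists_gain_of_hasADTD [DecidableEq P] {μ N0 Na : ℝ} (hμ : 1 ≤ μ) (h : HasADTD sg N0 Na) :
    ∃ g : ℕ → ℝ, (∀ k, 1 ≤ g k) ∧ (∀ k, g k ≤ μ ^ N0) ∧
      ∀ k, μ ^ (if sg k = sg (k + 1) then 0 else 1) * g k ≤ μ ^ (1 / Na) * g (k + 1) := by
  refine ⟨fun k => μ ^ switchExcess sg Na k, fun k => Real.one_le_rpow hμ (switchExcess_nonneg Na k),
    fun k => Real.rpow_le_rpow_of_exponent_le hμ (switchExcess_le h k), fun k => ?_⟩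
  have hμ0 : 0 < μ := one_pos.trans_le hμ
  rw [← Real.rpow_natCast, ← Real.rpow_add hμ0, ← Real.rpow_add hμ0, add_comm (1 / Na)]
  exact Real.rpow_le_rpow_of_exponent_le hμ (by linarith [switchExcess_add_le (sg := sg) Na k])

end Switching

theorem IsClassKInf.mono {a : ℝ → ℝ} (ha : IsClassKInf a) {s t : ℝ} (hs : 0 ≤ s) (hst : s ≤ t) :
    a s ≤ a t :=
  ha.2.1.monotoneOn hs (hs.trans hst) hst

theorem IsClassKInf.nonneg {a : ℝ → ℝ} (ha : IsClassKInf a) {s : ℝ} (hs : 0 ≤ s) : 0 ≤ a s :=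
  ha.2.2.1 ▸ ha.mono le_rfl hs

theorem rpow_one_div_mul_le_of_log_div_log_le {μ l δ Na : ℝ} (hμ : 0 < μ) (hl : 0 < l)
    (hlδ : l < δ) (hNa : 0 < Na) (h : Real.log μ / Real.log (δ / l) ≤ Na) :
    μ ^ (1 / Na) * l ≤ δ := by
  have hδl : 0 < Real.log (δ / l) := Real.log_pos ((one_lt_div hl).2 hlδ)
  rw [← le_div_iff₀ hl, Real.rpow_le_iff_le_log hμ (div_pos (hl.trans hlδ) hl), one_div_mul_eq_div,
    div_le_iff₀ hNa]
  rwa [div_le_iff₀ hδl, mul_comm] at h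

theorem isCompact_setOf_le_of_tendsto_le_comp_norm {E : Type*} [SeminormedAddCommGroup E]
    [ProperSpace E] {V : E → ℝ} {α : ℝ → ℝ} (hV : Continuous V) (hα : Tendsto α atTop atTop)
    (x₀ : E) (hαV : ∀ x, α ‖x - x₀‖ ≤ V x) (c : ℝ) : IsCompact {x | V x ≤ c} := by
  obtain ⟨R, hR⟩ := eventually_atTop.1 (hα.eventually_gt_atTop c)
  refine (isCompact_closedBall x₀ R).of_isClosed_subset (isClosed_le hV continuous_const)
    fun x hx => ?_
  rw [Metric.mem_closedBall, dist_eq_norm]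
  by_contra! hxR
  exact (hR _ hxR.le).not_ge ((hαV x).trans hx)

theorem le_or_le_pow_mul_of_switch {X P : Type*} [DecidableEq P] {V : P → X → ℝ} {κ μ ω : ℝ}
    (hμb : ∀ p q x, κ ≤ V p x → V q x ≤ μ * V p x) (hωb : ∀ p x, (∃ q, V q x ≤ κ) → V p x ≤ ω)
    (p q : P) (x : X) : V q x ≤ ω ∨ V q x ≤ μ ^ (if p = q then 0 else 1) * V p x := by
  by_cases hpq : p = q
  · simp [hpq]
  rcases le_or_gt κ (V p x) with hκ | hκ
  · simpa [hpq] using Or.inr (hμb p q x hκ)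
  · exact Or.inl (hωb q x ⟨p, hκ.le⟩)

section Recursion

variable {w v g c : ℕ → ℝ} {a b θ δ ω : ℝ}

theorem le_gain_mul_of_reset_or_step (ha : 0 ≤ a) (hb : 0 ≤ b) (hθ : 0 ≤ θ) (hω : 0 ≤ ω)
    (hθb : θ * b ≤ δ) (hδ : δ < 1) (hg : ∀ k, 1 ≤ g k) (hc : ∀ k, 0 ≤ c k)
    (hcg : ∀ k, c k * g k ≤ θ * g (k + 1)) (h0 : w 0 ≤ ω)
    (hw : ∀ k, w (k + 1) ≤ ω ∨ w (k + 1) ≤ c k * v k) (hv : ∀ k, v k ≤ b * w k + a) (k : ℕ) :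
    w k ≤ g k * (ω + θ * a / (1 - δ)) := by
  set K := ω + θ * a / (1 - δ)
  have hδ' : 0 < 1 - δ := by linarith
  have hK : 0 ≤ K := add_nonneg hω (div_nonneg (mul_nonneg hθ ha) hδ'.le)
  have hωK : ∀ k, ω ≤ g k * K := fun k =>
    (le_add_of_nonneg_right (by positivity)).trans (le_mul_of_one_le_left hK (hg k))
  -- `K` is the fixed point of `t ↦ (1 - δ) * ω + δ * t + θ * a`
  have hKfix : θ * b * K + θ * a ≤ K := by
    have : δ * K + θ * a = δ * ω + θ * a / (1 - δ) := by simp only [K]; field_simp; ring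
    nlinarith [mul_le_mul_of_nonneg_right hθb hK]
  induction k with
  | zero => exact h0.trans (hωK 0)
  | succ k ih =>
    rcases hw k with hreset | hgain
    · exact hreset.trans (hωK _)
    have hc' : c k ≤ θ * g (k + 1) := (le_mul_of_one_le_right (hc k) (hg k)).trans (hcg k)
    calc w (k + 1) ≤ c k * (b * (g k * K) + a) :=
          hgain.trans (mul_le_mul_of_nonneg_left ((hv k).trans (by gcongr)) (hc k))
      _ = b * K * (c k * g k) + c k * a := by ring
      _ ≤ b * K * (θ * g (k + 1)) + θ * g (k + 1) * a :=
          add_le_add (mul_le_mul_of_nonneg_left (hcg k) (by positivity))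
            (mul_le_mul_of_nonneg_right hc' ha)
      _ = g (k + 1) * (θ * b * K + θ * a) := by ring
      _ ≤ g (k + 1) * K := by gcongr; linarith [hg (k + 1)]

theorem le_of_reset_or_step {G : ℝ} (ha : 0 ≤ a) (hb : 0 ≤ b) (hθ : 1 ≤ θ) (hω : 0 ≤ ω)
    (hθb : θ * b ≤ δ) (hδ : δ < 1) (hg : ∀ k, 1 ≤ g k) (hgG : ∀ k, g k ≤ G) (hc : ∀ k, 0 ≤ c k)
    (hcg : ∀ k, c k * g k ≤ θ * g (k + 1)) (h0 : w 0 ≤ ω)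
    (hw : ∀ k, w (k + 1) ≤ ω ∨ w (k + 1) ≤ c k * v k) (hv : ∀ k, v k ≤ b * w k + a) (k : ℕ) :
    v k ≤ G * ω + G / (1 - δ) * a := by
  have hwk := le_gain_mul_of_reset_or_step ha hb (by linarith) hω hθb hδ hg hc hcg h0 hw hv k
  have hG : 1 ≤ G := (hg 0).trans (hgG 0)
  have hδ' : 0 < 1 - δ := by linarith
  have hb1 : b ≤ 1 := by nlinarith
  have hbθ : b * θ / (1 - δ) ≤ δ / (1 - δ) :=
    div_le_div_of_nonneg_right (by linarith) hδ'.le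
  have hwG : w k ≤ G * (ω + θ * a / (1 - δ)) :=
    hwk.trans (mul_le_mul_of_nonneg_right (hgG k)
      (add_nonneg hω (div_nonneg (by positivity) hδ'.le)))
  calc v k ≤ b * (G * (ω + θ * a / (1 - δ))) + a := (hv k).trans (by gcongr)
    _ = G * (b * ω) + G * a * (b * θ / (1 - δ)) + a := by ring
    _ ≤ G * ω + G * a * (δ / (1 - δ)) + G * a :=
        add_le_add (add_le_add (mul_le_mul_of_nonneg_left (mul_le_of_le_one_left hω hb1)
          (by linarith)) (mul_le_mul_of_nonneg_left hbθ (by positivity)))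
          (le_mul_of_one_le_left ha hG)
    _ = G * ω + G / (1 - δ) * a := by field_simp; ring

end Recursion

theorem practically_stable_initial_set_discrete_general
    (n m : ℕ) (P : Type) [Fintype P] [Nonempty P]
    (f : P → EuclideanSpace ℝ (Fin n) → EuclideanSpace ℝ (Fin m) → EuclideanSpace ℝ (Fin n))
    (xstar : P → EuclideanSpace ℝ (Fin n))
    (V : P → EuclideanSpace ℝ (Fin n) → ℝ)
    (hVcont : ∀ p, Continuous (V p))
    (hVnonneg : ∀ p x, 0 ≤ V p x)
    (alow aup ain : P → ℝ → ℝ)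
    (halow : ∀ p, IsClassKInf (alow p)) (haup : ∀ p, IsClassKInf (aup p))
    (hain : ∀ p, IsClassKInf (ain p))
    (lam : P → ℝ) (hlam : ∀ p, 0 < lam p ∧ lam p < 1)
    (hsandwich : ∀ p x, alow p ‖x - xstar p‖ ≤ V p x ∧ V p x ≤ aup p ‖x - xstar p‖)
    (hdecr : ∀ p x u, V p (f p x u) ≤ lam p * V p x + ain p ‖u‖)
    (κ : ℝ) (hκ : 0 < κ)
    (μ : ℝ) (hμ : 1 ≤ μ)
    (hμb : ∀ (p q : P) (x : EuclideanSpace ℝ (Fin n)), κ ≤ V p x → V q x ≤ μ * V p x)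
    (ω : ℝ) (hω : 0 < ω)
    (hωb : ∀ (p : P) (x : EuclideanSpace ℝ (Fin n)), (∃ q : P, V q x ≤ κ) → V p x ≤ ω)
    (δ : ℝ) (hδ1 : Finset.univ.sup' Finset.univ_nonempty lam < δ) (hδ2 : δ < 1) :
    (⋂ p : P, {x : EuclideanSpace ℝ (Fin n) | V p x ≤ ω}).Nonempty ∧
    IsCompact (⋂ p : P, {x : EuclideanSpace ℝ (Fin n) | V p x ≤ ω}) ∧
    ∀ (sg : ℕ → P) (N0 Na : ℝ), 1 ≤ N0 → 0 < Na →
      Real.log μ / Real.log (δ / Finset.univ.sup' Finset.univ_nonempty lam) ≤ Na →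
      HasADTD sg N0 Na →
      ∀ d : ℕ → EuclideanSpace ℝ (Fin m), BddAbove (Set.range fun k => ‖d k‖) →
        ∀ x : ℕ → EuclideanSpace ℝ (Fin n), (∀ k, x (k + 1) = f (sg k) (x k) (d k)) →
          x 0 ∈ ⋂ p : P, {y : EuclideanSpace ℝ (Fin n) | V p y ≤ ω} →
          ∀ k : ℕ, ∃ p : P,
            V p (x k) ≤ μ ^ N0 * ω +
              μ ^ N0 / (1 - δ) *
                (Finset.univ.sup' Finset.univ_nonempty fun q => ain q (⨆ j, ‖d j‖)) := by
  classical
  obtain ⟨p₀⟩ := ‹Nonempty P›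
  have hlam_le : ∀ p, lam p ≤ univ.sup' univ_nonempty lam := fun p => le_sup' lam (mem_univ p)
  have hb : 0 < univ.sup' univ_nonempty lam := (hlam p₀).1.trans_le (hlam_le p₀)
  have hxstar : V p₀ (xstar p₀) ≤ κ :=
    (hsandwich p₀ _).2.trans (by simp [(haup p₀).2.2.1, hκ.le])
  refine ⟨⟨xstar p₀, Set.mem_iInter.2 fun p => hωb p _ ⟨p₀, hxstar⟩⟩,
    (isCompact_setOf_le_of_tendsto_le_comp_norm (hVcont p₀) (halow p₀).2.2.2 (xstar p₀)
      (fun x => (hsandwich p₀ x).1) ω).of_isClosed_subset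
      (isClosed_iInter fun p => isClosed_le (hVcont p) continuous_const) (Set.iInter_subset _ p₀),
    fun sg N0 Na _ hNa hNaδ hADT d hd x hx hx0 => ?_⟩
  set A := univ.sup' univ_nonempty fun q => ain q (⨆ j, ‖d j‖)
  have hdA : ∀ p k, ain p ‖d k‖ ≤ A := fun p k =>
    ((hain p).mono (norm_nonneg _) (le_ciSup hd k)).trans
      (le_sup' (fun q => ain q (⨆ j, ‖d j‖)) (mem_univ p))
  have hA : 0 ≤ A := ((hain p₀).nonneg (norm_nonneg _)).trans (hdA p₀ 0)
  have hv : ∀ k, V (sg k) (x (k + 1)) ≤ univ.sup' univ_nonempty lam * V (sg k) (x k) + A := by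
    intro k
    rw [hx k]
    exact (hdecr _ _ _).trans
      (add_le_add (mul_le_mul_of_nonneg_right (hlam_le _) (hVnonneg _ _)) (hdA _ k))
  obtain ⟨g, hg1, hgG, hcg⟩ := exists_gain_of_hasADTD hμ hADT
  have hbound := le_of_reset_or_step hA hb.le (Real.one_le_rpow hμ (by positivity)) hω.le
    (rpow_one_div_mul_le_of_log_div_log_le (by linarith) hb hδ1 hNa hNaδ) hδ2 hg1 hgG
    (fun k => by positivity) hcg (Set.mem_iInter.1 hx0 (sg 0))
    (fun k => le_or_le_pow_mul_of_switch hμb hωb (sg k) (sg (k + 1)) (x (k + 1))) hv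
  intro k
  cases k with
  | zero =>
    refine ⟨sg 0, (Set.mem_iInter.1 hx0 (sg 0)).trans (le_add_of_le_of_nonneg ?_ ?_)⟩
    · exact le_mul_of_one_le_left hω.le ((hg1 0).trans (hgG 0))
    · exact mul_nonneg (div_nonneg (by positivity) (by linarith)) hA
  | succ k => exact ⟨sg k, hbound k⟩

/-- Corollary 2: practically stable initial set for switched discrete systems. -/
theorem practically_stable_initial_set_discrete
    (n m : ℕ) (P : Type) [Fintype P] [Nonempty P]
    (f : P → EuclideanSpace ℝ (Fin n) → EuclideanSpace ℝ (Fin m) → EuclideanSpace ℝ (Fin n))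
    (hf : ∀ p, Continuous fun xu : EuclideanSpace ℝ (Fin n) × EuclideanSpace ℝ (Fin m) =>
      f p xu.1 xu.2)
    (xstar : P → EuclideanSpace ℝ (Fin n))
    (hfix : ∀ p, f p (xstar p) 0 = xstar p)
    (V : P → EuclideanSpace ℝ (Fin n) → ℝ)
    (hVcont : ∀ p, Continuous (V p))
    (hVnonneg : ∀ p x, 0 ≤ V p x)
    (alow aup ain : P → ℝ → ℝ)
    (halow : ∀ p, IsClassKInf (alow p)) (haup : ∀ p, IsClassKInf (aup p))
    (hain : ∀ p, IsClassKInf (ain p))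
    (lam : P → ℝ) (hlam : ∀ p, 0 < lam p ∧ lam p < 1)
    (hsandwich : ∀ p x, alow p ‖x - xstar p‖ ≤ V p x ∧ V p x ≤ aup p ‖x - xstar p‖)
    (hdecr : ∀ p x u, V p (f p x u) ≤ lam p * V p x + ain p ‖u‖)
    (κ : ℝ) (hκ : 0 < κ)
    (μ : ℝ) (hμ : 1 ≤ μ)
    (hμb : ∀ (p q : P) (x : EuclideanSpace ℝ (Fin n)), κ ≤ V p x → V q x ≤ μ * V p x)
    (ω : ℝ) (hω : 0 < ω)
    (hωb : ∀ (p : P) (x : EuclideanSpace ℝ (Fin n)), (∃ q : P, V q x ≤ κ) → V p x ≤ ω)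
    (δ : ℝ) (hδ1 : Finset.univ.sup' Finset.univ_nonempty lam < δ) (hδ2 : δ < 1) :
    (⋂ p : P, {x : EuclideanSpace ℝ (Fin n) | V p x ≤ ω}).Nonempty ∧
    IsCompact (⋂ p : P, {x : EuclideanSpace ℝ (Fin n) | V p x ≤ ω}) ∧
    ∀ (sg : ℕ → P) (N0 Na : ℝ), 1 ≤ N0 → 0 < Na →
      Real.log μ / Real.log (δ / Finset.univ.sup' Finset.univ_nonempty lam) ≤ Na →
      HasADTD sg N0 Na →
      ∀ d : ℕ → EuclideanSpace ℝ (Fin m), BddAbove (Set.range fun k => ‖d k‖) →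
        ∀ x : ℕ → EuclideanSpace ℝ (Fin n), (∀ k, x (k + 1) = f (sg k) (x k) (d k)) →
          x 0 ∈ ⋂ p : P, {y : EuclideanSpace ℝ (Fin n) | V p y ≤ ω} →
          ∀ k : ℕ, ∃ p : P,
            V p (x k) ≤ μ ^ N0 * ω +
              μ ^ N0 / (1 - δ) *
                (Finset.univ.sup' Finset.univ_nonempty fun q => ain q (⨆ j, ‖d j‖)) :=
  practically_stable_initial_set_discrete_general n m P f xstar V hVcont hVnonneg alow aup ain halow
    haup hain lam hlam hsandwich hdecr κ hκ μ hμ hμb ω hω hωb δ hδ1 hδ2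
end

section
/- Analytical bound on the switching ratio of quadratic Lyapunov functions (Proposition 1, bound for μ(κ)): For every κ > 0, all p, q ∈ P, and every x ∈ ℝ^n with (x − x_p*)ᵀ S_p (x − x_p*) ≥ κ, one has (x − x_q*)ᵀ S_q (x − x_q*) ≤ (λ_max(S_q)/λ_min(S_p)) · ( 1 + √(λ_max(S_p)/κ)·‖x_p* − x_q*‖ )² · (x − x_p*)ᵀ S_p (x − x_p*). -/
/-!
Rayleigh bounds give `λ_min(S_p) ‖x - x_p*‖² ≤ V_p(x) ≤ λ_max(S_p) ‖x - x_p*‖²` and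
`V_q(x) ≤ λ_max(S_q) ‖x - x_q*‖²`. On the region `V_p(x) ≥ κ` the upper bound forces
`‖x - x_p*‖ ≥ √(κ / λ_max(S_p))`, so the shift `‖x_p* - x_q*‖` in the triangle inequality
`‖x - x_q*‖ ≤ ‖x - x_p*‖ + ‖x_p* - x_q*‖` is at most `√(λ_max(S_p) / κ) ‖x_p* - x_q*‖` times
`‖x - x_p*‖`. Squaring and chaining the Rayleigh bounds gives the claim.
-/

open Matrix
open scoped MatrixOrder

theorem EuclideanSpace.dotProduct_self_eq_norm_sq {ι : Type*} [Fintype ι]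
    (v : EuclideanSpace ℝ ι) : v.ofLp ⬝ᵥ v.ofLp = ‖v‖ ^ 2 := by
  rw [← real_inner_self_eq_norm_sq, EuclideanSpace.inner_eq_star_dotProduct, star_trivial]

namespace Matrix

variable {ι : Type*} [Fintype ι] [DecidableEq ι] {A : Matrix ι ι ℝ}

theorem dotProduct_mulVec_le_of_le_algebraMap {r : ℝ} (h : A ≤ algebraMap ℝ _ r)
    (v : ι → ℝ) : v ⬝ᵥ A *ᵥ v ≤ r * (v ⬝ᵥ v) := by
  have := (le_iff.mp h).dotProduct_mulVec_nonneg v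
  simp only [star_trivial, Algebra.algebraMap_eq_smul_one, sub_mulVec, smul_mulVec, one_mulVec,
    dotProduct_sub, dotProduct_smul, smul_eq_mul] at this
  linarith

theorem le_dotProduct_mulVec_of_algebraMap_le {r : ℝ} (h : algebraMap ℝ _ r ≤ A)
    (v : ι → ℝ) : r * (v ⬝ᵥ v) ≤ v ⬝ᵥ A *ᵥ v := by
  have := (le_iff.mp h).dotProduct_mulVec_nonneg v
  simp only [star_trivial, Algebra.algebraMap_eq_smul_one, sub_mulVec, smul_mulVec, one_mulVec,
    dotProduct_sub, dotProduct_smul, smul_eq_mul] at this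
  linarith

theorem IsHermitian.dotProduct_mulVec_le_iSup_eigenvalues_mul_norm_sq (hA : A.IsHermitian)
    (v : EuclideanSpace ℝ ι) :
    v.ofLp ⬝ᵥ A *ᵥ v.ofLp ≤ (⨆ i, hA.eigenvalues i) * ‖v‖ ^ 2 := by
  have hle : A ≤ algebraMap ℝ _ (⨆ i, hA.eigenvalues i) := by
    refine le_algebraMap_of_spectrum_le ?_ hA.isSelfAdjoint
    rw [hA.spectrum_real_eq_range_eigenvalues]
    rintro _ ⟨i, rfl⟩
    exact le_ciSup (Finite.bddAbove_range _) i
  simpa only [EuclideanSpace.dotProduct_self_eq_norm_sq] using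
    dotProduct_mulVec_le_of_le_algebraMap hle v.ofLp

theorem IsHermitian.iInf_eigenvalues_mul_norm_sq_le_dotProduct_mulVec (hA : A.IsHermitian)
    (v : EuclideanSpace ℝ ι) :
    (⨅ i, hA.eigenvalues i) * ‖v‖ ^ 2 ≤ v.ofLp ⬝ᵥ A *ᵥ v.ofLp := by
  have hle : algebraMap ℝ _ (⨅ i, hA.eigenvalues i) ≤ A := by
    refine algebraMap_le_of_le_spectrum ?_ hA.isSelfAdjoint
    rw [hA.spectrum_real_eq_range_eigenvalues]
    rintro _ ⟨i, rfl⟩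
    exact ciInf_le (Finite.bddBelow_range _) i
  simpa only [EuclideanSpace.dotProduct_self_eq_norm_sq] using
    le_dotProduct_mulVec_of_algebraMap_le hle v.ofLp

theorem PosDef.iInf_eigenvalues_pos [Nonempty ι] (hA : A.PosDef) :
    0 < ⨅ i, hA.isHermitian.eigenvalues i := by
  obtain ⟨i, hi⟩ := exists_eq_ciInf_of_finite (f := hA.isHermitian.eigenvalues)
  exact hi ▸ hA.eigenvalues_pos i

theorem PosDef.iSup_eigenvalues_pos [Nonempty ι] (hA : A.PosDef) :
    0 < ⨆ i, hA.isHermitian.eigenvalues i :=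
  (hA.eigenvalues_pos (Classical.arbitrary ι)).trans_le (le_ciSup (Finite.bddAbove_range _) _)

end Matrix

theorem norm_sub_le_one_add_mul_mul_norm_sub {E : Type*} [SeminormedAddCommGroup E] {x y z : E}
    {c : ℝ} (h : 1 ≤ c * ‖x - y‖) : ‖x - z‖ ≤ (1 + c * ‖y - z‖) * ‖x - y‖ := by
  have := norm_sub_le_norm_sub_add_norm_sub x y z
  nlinarith [norm_nonneg (y - z)]

theorem Real.one_le_sqrt_div_mul_of_le_mul_sq {κ M a : ℝ} (hκ : 0 < κ) (ha : 0 ≤ a)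
    (h : κ ≤ M * a ^ 2) : 1 ≤ √(M / κ) * a := by
  rwa [← Real.sqrt_sq ha, ← Real.sqrt_mul' _ (sq_nonneg a), Real.one_le_sqrt, div_mul_eq_mul_div,
    one_le_div hκ]

theorem quadratic_switching_ratio_bound_general
    (n : ℕ) (hn : 0 < n) (P : Type)
    (S : P → Matrix (Fin n) (Fin n) ℝ)
    (hHerm : ∀ p, (S p).IsHermitian)
    (hPD : ∀ p, (S p).PosDef)
    (xstar : P → EuclideanSpace ℝ (Fin n))
    (κ : ℝ) (hκ : 0 < κ) (p q : P) (x : EuclideanSpace ℝ (Fin n))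
    (hx : κ ≤ dotProduct (x - xstar p) ((S p).mulVec (x - xstar p))) :
    dotProduct (x - xstar q) ((S q).mulVec (x - xstar q)) ≤
      (⨆ i, (hHerm q).eigenvalues i) / (⨅ i, (hHerm p).eigenvalues i) *
        (1 + Real.sqrt ((⨆ i, (hHerm p).eigenvalues i) / κ) * ‖xstar p - xstar q‖) ^ 2 *
        dotProduct (x - xstar p) ((S p).mulVec (x - xstar p)) := by
  have : Nonempty (Fin n) := ⟨⟨0, hn⟩⟩
  have hmin_p := (hPD p).iInf_eigenvalues_pos
  have hmax_q := (hPD q).iSup_eigenvalues_pos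
  have hfar := Real.one_le_sqrt_div_mul_of_le_mul_sq hκ (norm_nonneg _)
    (hx.trans ((hHerm p).dotProduct_mulVec_le_iSup_eigenvalues_mul_norm_sq (x - xstar p)))
  have htri := norm_sub_le_one_add_mul_mul_norm_sub (z := xstar q) hfar
  have hnorm_sq : ‖x - xstar p‖ ^ 2 ≤ dotProduct (x - xstar p) ((S p).mulVec (x - xstar p)) /
      ⨅ i, (hHerm p).eigenvalues i := by
    rw [le_div_iff₀ hmin_p, mul_comm]
    exact (hHerm p).iInf_eigenvalues_mul_norm_sq_le_dotProduct_mulVec (x - xstar p)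
  set C := 1 + Real.sqrt ((⨆ i, (hHerm p).eigenvalues i) / κ) * ‖xstar p - xstar q‖
  calc dotProduct (x - xstar q) ((S q).mulVec (x - xstar q))
      ≤ (⨆ i, (hHerm q).eigenvalues i) * ‖x - xstar q‖ ^ 2 :=
        (hHerm q).dotProduct_mulVec_le_iSup_eigenvalues_mul_norm_sq (x - xstar q)
    _ ≤ (⨆ i, (hHerm q).eigenvalues i) * (C ^ 2 * ‖x - xstar p‖ ^ 2) := by
        rw [← mul_pow]
        gcongr
    _ ≤ (⨆ i, (hHerm q).eigenvalues i) * (C ^ 2 *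
          (dotProduct (x - xstar p) ((S p).mulVec (x - xstar p)) /
            ⨅ i, (hHerm p).eigenvalues i)) := by
        gcongr
    _ = _ := by ring

/-- Proposition 1, bound for `μ(κ)`: analytical bound on the switching ratio of
quadratic Lyapunov functions `V_p(x) = (x - x_p*)ᵀ S_p (x - x_p*)`. -/
theorem quadratic_switching_ratio_bound
    (n : ℕ) (hn : 0 < n) (P : Type) [Fintype P] [Nonempty P]
    (S : P → Matrix (Fin n) (Fin n) ℝ)
    (hHerm : ∀ p, (S p).IsHermitian)
    (hPD : ∀ p, (S p).PosDef)
    (xstar : P → EuclideanSpace ℝ (Fin n))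
    (κ : ℝ) (hκ : 0 < κ) (p q : P) (x : EuclideanSpace ℝ (Fin n))
    (hx : κ ≤ dotProduct (x - xstar p) ((S p).mulVec (x - xstar p))) :
    dotProduct (x - xstar q) ((S q).mulVec (x - xstar q)) ≤
      (⨆ i, (hHerm q).eigenvalues i) / (⨅ i, (hHerm p).eigenvalues i) *
        (1 + Real.sqrt ((⨆ i, (hHerm p).eigenvalues i) / κ) * ‖xstar p - xstar q‖) ^ 2 *
        dotProduct (x - xstar p) ((S p).mulVec (x - xstar p)) :=
  quadratic_switching_ratio_bound_general n hn P S hHerm hPD xstar κ hκ p q x hx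
end

section
/- Inductive multi-switch Lyapunov estimate for switched discrete systems (equation (42) in the proof of Lemma 1): Let λ ∈ (0,1) and let α̂ be of class K∞ with V_p(f_p(x,u)) ≤ λ·V_p(x) + α̂(‖u‖) for all p ∈ P, x ∈ ℝ^n, u ∈ ℝ^m. Fix κ > 0 and let μ ≥ 1 satisfy V_q(x) ≤ μ·V_p(x) for all p, q ∈ P and all x with V_p(x) ≥ κ. Let σ be any switching signal, x_0 any initial state, d any bounded discrete disturbance, and (x_k) the solution. Let 0 < k_1 < k_2 < ⋯ enumerate the switching instants of σ (indices j ≥ 1 with σ(j) ≠ σ(j−1)) and set k_0 := 0. Suppose m ≥ 1 is such that k_m exists and V_{σ(k_n − 1)}(x_{k_n}) ≥ κ for all 1 ≤ n ≤ m. Then for every k ≥ k_m such that σ(j) = σ(k_m) for all k_m ≤ j ≤ k: V_{σ(k)}(x_k) ≤ μ^m·λ^k·V_{σ(0)}(x_0) + ( G(k_m, k) + Σ_{j=0}^{m−1} μ^{m−j}·λ^{k−k_{j+1}}·G(k_j, k_{j+1}) )·α̂(‖d‖∞), where G(a,b) := Σ_{i=0}^{b−a−1} λ^i for natural numbers a ≤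 b. -/
/-!
Within a run of constant mode `p`, the decrease condition iterates to
`V_p(x_b) ≤ λ^(b-a) V_p(x_a) + (∑_{i<b-a} λ^i) α̂(‖d‖∞)`. At a switching instant the hypothesis
`V_q ≤ μ V_p` applies because the state there is outside the `κ`-sublevel set of the outgoing
mode, so each switch multiplies the accumulated bound by `μ`; induction on the number of switches
gives the estimate.
-/

open Finset

section Estimates

variable {lam μ c : ℝ}

theorem le_pow_mul_add_geom_sum_mul_of_step_le {v : ℕ → ℝ} (hlam : 0 ≤ lam) {a b : ℕ}
    (hab : a ≤ b) (hstep : ∀ j, a ≤ j → j < b → v (j + 1) ≤ lam * v j + c) :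
    v b ≤ lam ^ (b - a) * v a + (∑ i ∈ range (b - a), lam ^ i) * c := by
  induction b, hab using Nat.le_induction with
  | base => simp
  | succ b hab ih =>
    have hprev := ih fun j hj hjb => hstep j hj (by omega)
    calc v (b + 1) ≤ lam * v b + c := hstep b hab (by omega)
      _ ≤ lam * (lam ^ (b - a) * v a + (∑ i ∈ range (b - a), lam ^ i) * c) + c := by gcongr
      _ = lam ^ (b + 1 - a) * v a + (∑ i ∈ range (b + 1 - a), lam ^ i) * c := by
        rw [Nat.sub_add_comm hab, geom_sum_succ, pow_succ]; ring

/-- The right-hand side of (42) after the switches `ks 1 < ⋯ < ks M`, at time `k`, with `v₀` for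
`V_{σ(0)}(x₀)` and `c` for `α̂(‖d‖∞)`. -/
noncomputable def multiswitchBound (lam μ v₀ c : ℝ) (ks : ℕ → ℕ) (M k : ℕ) : ℝ :=
  μ ^ M * lam ^ k * v₀ +
    ((∑ i ∈ range (k - ks M), lam ^ i) +
      ∑ j ∈ range M, μ ^ (M - j) * lam ^ (k - ks (j + 1)) *
        ∑ i ∈ range (ks (j + 1) - ks j), lam ^ i) * c

theorem multiswitchBound_succ {v₀ : ℝ} {ks : ℕ → ℕ} {M k : ℕ}
    (hks : ∀ i ≤ M, ks i ≤ ks (M + 1)) (hk : ks (M + 1) ≤ k) :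
    multiswitchBound lam μ v₀ c ks (M + 1) k =
      lam ^ (k - ks (M + 1)) * (μ * multiswitchBound lam μ v₀ c ks M (ks (M + 1))) +
        (∑ i ∈ range (k - ks (M + 1)), lam ^ i) * c := by
  set K := ks (M + 1)
  have hpow_k : lam ^ (k - K) * lam ^ K = lam ^ k := by rw [← pow_add, Nat.sub_add_cancel hk]
  have hterm : ∀ j ∈ range M, lam ^ (k - K) * μ * (μ ^ (M - j) * lam ^ (K - ks (j + 1)) *
      ∑ i ∈ range (ks (j + 1) - ks j), lam ^ i) = μ ^ (M + 1 - j) * lam ^ (k - ks (j + 1)) *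
      ∑ i ∈ range (ks (j + 1) - ks j), lam ^ i := by
    intro j hj
    have hjM : j < M := mem_range.1 hj
    have hjK : ks (j + 1) ≤ K := hks (j + 1) hjM
    rw [Nat.sub_add_comm hjM.le, pow_succ,
      show k - ks (j + 1) = (k - K) + (K - ks (j + 1)) by omega, pow_add]
    ring
  unfold multiswitchBound
  rw [sum_range_succ, Nat.add_sub_cancel_left, pow_one, ← sum_congr rfl hterm, ← mul_sum,
    ← hpow_k, pow_succ]
  ring

variable {P X : Type*} {V : P → X → ℝ} {sg : ℕ → P} {x : ℕ → X} {ks : ℕ → ℕ}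

theorem le_pow_mul_add_geom_sum_mul_of_mode_const (hlam : 0 ≤ lam)
    (hstep : ∀ j, V (sg j) (x (j + 1)) ≤ lam * V (sg j) (x j) + c) {a b : ℕ} (hab : a ≤ b)
    (hconst : ∀ j, a ≤ j → j < b → sg j = sg a) :
    V (sg a) (x b) ≤ lam ^ (b - a) * V (sg a) (x a) + (∑ i ∈ range (b - a), lam ^ i) * c :=
  le_pow_mul_add_geom_sum_mul_of_step_le (v := fun j => V (sg a) (x j)) hlam hab
    fun j hj hjb => by simpa only [hconst j hj hjb] using hstep j

theorem le_multiswitchBound (hlam : 0 ≤ lam) (hμ : 0 ≤ μ)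
    (hstep : ∀ j, V (sg j) (x (j + 1)) ≤ lam * V (sg j) (x j) + c) (hks0 : ks 0 = 0) {M : ℕ}
    (hmono : ∀ i < M, ks i < ks (i + 1))
    (hconst : ∀ i < M, ∀ j, ks i ≤ j → j < ks (i + 1) → sg j = sg (ks i))
    (hjump : ∀ i, 1 ≤ i → i ≤ M → V (sg (ks i)) (x (ks i)) ≤ μ * V (sg (ks i - 1)) (x (ks i)))
    {k : ℕ} (hk : ks M ≤ k) (hconst_last : ∀ j, ks M ≤ j → j < k → sg j = sg (ks M)) :
    V (sg (ks M)) (x k) ≤ multiswitchBound lam μ (V (sg 0) (x 0)) c ks M k := by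
  induction M generalizing k with
  | zero =>
    rw [hks0] at hconst_last ⊢
    simpa [multiswitchBound, hks0] using
      le_pow_mul_add_geom_sum_mul_of_mode_const hlam hstep (Nat.zero_le k) hconst_last
  | succ M ih =>
    set K := ks (M + 1)
    have hks_le : ∀ i ≤ M, ks i ≤ K := fun i hi =>
      (strictMonoOn_Iic_of_lt_succ hmono).monotoneOn (Set.mem_Iic.2 (by omega))
        (Set.mem_Iic.2 le_rfl) (by omega)
    have hlast_gap : ks M < K := hmono M (by omega)
    have hmode_before : sg (K - 1) = sg (ks M) := hconst M (by omega) (K - 1) (by omega) (by omega)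
    have h_upto_K := ih (fun i hi => hmono i (by omega)) (fun i hi => hconst i (by omega))
      (fun i h1 h2 => hjump i h1 (by omega)) hlast_gap.le (hconst M (by omega))
    have h_at_K : V (sg K) (x K) ≤ μ * multiswitchBound lam μ (V (sg 0) (x 0)) c ks M K := by
      calc V (sg K) (x K) ≤ μ * V (sg (K - 1)) (x K) := hjump (M + 1) (by omega) le_rfl
        _ ≤ _ := by rw [hmode_before]; gcongr
    rw [multiswitchBound_succ hks_le hk]
    calc V (sg K) (x k)
        ≤ lam ^ (k - K) * V (sg K) (x K) + (∑ i ∈ range (k - K), lam ^ i) * c :=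
          le_pow_mul_add_geom_sum_mul_of_mode_const hlam hstep hk hconst_last
      _ ≤ _ := by gcongr

end Estimates

theorem inductive_multiswitch_estimate_discrete_general
    (n m : ℕ) (P : Type)
    (f : P → EuclideanSpace ℝ (Fin n) → EuclideanSpace ℝ (Fin m) → EuclideanSpace ℝ (Fin n))
    (V : P → EuclideanSpace ℝ (Fin n) → ℝ)
    (lam : ℝ) (hlam0 : 0 < lam)
    (ahat : ℝ → ℝ) (hahat : IsClassKInf ahat)
    (hdecr : ∀ p x u, V p (f p x u) ≤ lam * V p x + ahat ‖u‖)
    (κ : ℝ)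
    (μ : ℝ) (hμ : 1 ≤ μ)
    (hμb : ∀ (p q : P) (x : EuclideanSpace ℝ (Fin n)), κ ≤ V p x → V q x ≤ μ * V p x)
    (sg : ℕ → P)
    (d : ℕ → EuclideanSpace ℝ (Fin m)) (hd : BddAbove (Set.range fun k => ‖d k‖))
    (x : ℕ → EuclideanSpace ℝ (Fin n)) (hx : ∀ k, x (k + 1) = f (sg k) (x k) (d k))
    (ks : ℕ → ℕ) (m' : ℕ)
    (hks0 : ks 0 = 0)
    (hksmono : ∀ i < m', ks i < ks (i + 1))
    (hconst : ∀ i < m', ∀ j, ks i ≤ j → j < ks (i + 1) → sg j = sg (ks i))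
    (hgood : ∀ i, 1 ≤ i → i ≤ m' → κ ≤ V (sg (ks i - 1)) (x (ks i)))
    (k : ℕ) (hk : ks m' ≤ k)
    (hconst2 : ∀ j, ks m' ≤ j → j ≤ k → sg j = sg (ks m')) :
    V (sg k) (x k) ≤
      μ ^ m' * lam ^ k * V (sg 0) (x 0) +
        ((∑ i ∈ Finset.range (k - ks m'), lam ^ i) +
          ∑ j ∈ Finset.range m', μ ^ (m' - j) * lam ^ (k - ks (j + 1)) *
            ∑ i ∈ Finset.range (ks (j + 1) - ks j), lam ^ i) * ahat (⨆ j, ‖d j‖) := by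
  have hstep : ∀ j, V (sg j) (x (j + 1)) ≤ lam * V (sg j) (x j) + ahat (⨆ j, ‖d j‖) := by
    intro j
    have hd_le : ‖d j‖ ≤ ⨆ j, ‖d j‖ := le_ciSup hd j
    rw [hx j]
    grw [hdecr, hahat.2.1.monotoneOn (norm_nonneg _) ((norm_nonneg _).trans hd_le) hd_le]
  rw [hconst2 k hk le_rfl]
  exact le_multiswitchBound hlam0.le (zero_le_one.trans hμ) hstep hks0 hksmono hconst
    (fun i h1 h2 => hμb _ _ _ (hgood i h1 h2)) hk fun j hj hjk => hconst2 j hj hjk.le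

/-- Equation (42) in the proof of Lemma 1: inductive multi-switch Lyapunov estimate
for switched discrete systems.  Here `ks 0 = 0 < ks 1 < ⋯ < ks m'` enumerate the
switching instants of `sg` up to `ks m'`, and `G a b = ∑_{i=0}^{b-a-1} λ^i` appears
as an explicit geometric sum. -/
theorem inductive_multiswitch_estimate_discrete
    (n m : ℕ) (P : Type) [Fintype P] [Nonempty P]
    (f : P → EuclideanSpace ℝ (Fin n) → EuclideanSpace ℝ (Fin m) → EuclideanSpace ℝ (Fin n))
    (hf : ∀ p, Continuous fun xu : EuclideanSpace ℝ (Fin n) × EuclideanSpace ℝ (Fin m) =>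
      f p xu.1 xu.2)
    (xstar : P → EuclideanSpace ℝ (Fin n))
    (hfix : ∀ p, f p (xstar p) 0 = xstar p)
    (V : P → EuclideanSpace ℝ (Fin n) → ℝ)
    (hVcont : ∀ p, Continuous (V p))
    (hVnonneg : ∀ p x, 0 ≤ V p x)
    (lam : ℝ) (hlam0 : 0 < lam) (hlam1 : lam < 1)
    (ahat : ℝ → ℝ) (hahat : IsClassKInf ahat)
    (hdecr : ∀ p x u, V p (f p x u) ≤ lam * V p x + ahat ‖u‖)
    (κ : ℝ) (hκ : 0 < κ)
    (μ : ℝ) (hμ : 1 ≤ μ)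
    (hμb : ∀ (p q : P) (x : EuclideanSpace ℝ (Fin n)), κ ≤ V p x → V q x ≤ μ * V p x)
    (sg : ℕ → P)
    (d : ℕ → EuclideanSpace ℝ (Fin m)) (hd : BddAbove (Set.range fun k => ‖d k‖))
    (x : ℕ → EuclideanSpace ℝ (Fin n)) (hx : ∀ k, x (k + 1) = f (sg k) (x k) (d k))
    (ks : ℕ → ℕ) (m' : ℕ) (hm' : 1 ≤ m')
    (hks0 : ks 0 = 0)
    (hksmono : ∀ i < m', ks i < ks (i + 1))
    (hconst : ∀ i < m', ∀ j, ks i ≤ j → j < ks (i + 1) → sg j = sg (ks i))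
    (hswitch : ∀ i, 1 ≤ i → i ≤ m' → sg (ks i) ≠ sg (ks i - 1))
    (hgood : ∀ i, 1 ≤ i → i ≤ m' → κ ≤ V (sg (ks i - 1)) (x (ks i)))
    (k : ℕ) (hk : ks m' ≤ k)
    (hconst2 : ∀ j, ks m' ≤ j → j ≤ k → sg j = sg (ks m')) :
    V (sg k) (x k) ≤
      μ ^ m' * lam ^ k * V (sg 0) (x 0) +
        ((∑ i ∈ Finset.range (k - ks m'), lam ^ i) +
          ∑ j ∈ Finset.range m', μ ^ (m' - j) * lam ^ (k - ks (j + 1)) *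
            ∑ i ∈ Finset.range (ks (j + 1) - ks j), lam ^ i) * ahat (⨆ j, ‖d j‖) :=
  inductive_multiswitch_estimate_discrete_general n m P f V lam hlam0 ahat hahat hdecr κ μ hμ hμb sg
    d hd x hx ks m' hks0 hksmono hconst hgood k hk hconst2
end
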